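/- Let β̂₁ = √μ_s(3√μ/2 + L), β̂₂ = (3/2)√μ·√μ_s, β̂₃ = 13√μ/16, β̂₄ = (4μ²√s + 3L√μ·√μ_s)/(8L²), and β̂₅ = √μ_s(5√μL/2 − μ^{3/2}/2). Then for every a ≥ 0 and every p̂ = (x̂,v̂) ∈ ℝⁿ×ℝⁿ, C_ST(p̂;a) ≤ (aβ̂₁ + a²β̂₅ − β̂₃)‖v̂‖² + (aβ̂₂ − β̂₄)‖∇f(x̂)‖². -/
import Mathlib


open scoped RealInnerProductSpace

noncomputable section

variable {n : ℕ}

local notation "E" => EuclideanSpace ℝ (Fin n)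

/-- √μ_s := 1 + √(μs) -/
def ms (μ s : ℝ) : ℝ := 1 + Real.sqrt (μ * s)

def CST (μ L s : ℝ) (f : E → ℝ) (f' : E → E) (a : ℝ) (x v : E) : ℝ :=
  -(13 * Real.sqrt μ / 16) * ‖v‖ ^ 2 - μ ^ 2 * Real.sqrt s / (2 * L ^ 2) * ‖f' x‖ ^ 2
    + ms μ s * (-(3 * Real.sqrt μ / (8 * L)) * ‖f' x‖ ^ 2
        + Real.sqrt μ * (f x - f (x + a • v))
        + Real.sqrt μ * ‖f' x‖ * ‖a • v‖
        - μ * Real.sqrt μ / 2 * ‖a • v‖ ^ 2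
        - ⟪f' (x + a • v) - f' x, v⟫
        + Real.sqrt μ * ⟪f' (x + a • v), a • v⟫)

def betah1 (μ L s : ℝ) : ℝ := ms μ s * (3 * Real.sqrt μ / 2 + L)
def betah2 (μ s : ℝ) : ℝ := 3 / 2 * Real.sqrt μ * ms μ s
def betah3 (μ : ℝ) : ℝ := 13 * Real.sqrt μ / 16
def betah4 (μ L s : ℝ) : ℝ :=
  (4 * μ ^ 2 * Real.sqrt s + 3 * L * Real.sqrt μ * ms μ s) / (8 * L ^ 2)
def betah5 (μ L s : ℝ) : ℝ :=
  ms μ s * (5 * Real.sqrt μ * L / 2 - μ * Real.sqrt μ / 2)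

private lemma stmt9_aux (μ L s a K G r m : ℝ) (hL : L ≠ 0) :
    (a * (m * (3 * r / 2 + L)) + a ^ 2 * (m * (5 * r * L / 2 - μ * r / 2)) - 13 * r / 16) * K ^ 2
      + (a * (3 / 2 * r * m) - (4 * μ ^ 2 * Real.sqrt s + 3 * L * r * m) / (8 * L ^ 2)) * G ^ 2
    = -(13 * r / 16) * K ^ 2 - μ ^ 2 * Real.sqrt s / (2 * L ^ 2) * G ^ 2
        - m * (3 * r / (8 * L)) * G ^ 2
        + m * (a * (3 * r / 2 + L) * K ^ 2
          + a ^ 2 * (5 * r * L / 2 - μ * r / 2) * K ^ 2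
          + a * (3 / 2 * r) * G ^ 2) := by
  field_simp
  ring

set_option maxHeartbeats 1600000 in
/-- C_ST(p̂;a) ≤ (aβ̂₁ + a²β̂₅ − β̂₃)‖v̂‖² + (aβ̂₂ − β̂₄)‖∇f(x̂)‖². -/
theorem stmt_9 {n : ℕ} (μ L s : ℝ) (hμ : 0 < μ) (hμL : μ ≤ L) (hs : 0 < s)
    (f : EuclideanSpace ℝ (Fin n) → ℝ)
    (f' : EuclideanSpace ℝ (Fin n) → EuclideanSpace ℝ (Fin n))
    (hgrad : ∀ x, HasGradientAt f (f' x) x)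
    (hconv : ∀ x y, f y - f x ≥ ⟪f' x, y - x⟫ + μ / 2 * ‖y - x‖ ^ 2)
    (hlip : ∀ x y, ‖f' x - f' y‖ ≤ L * ‖x - y‖)
    (xs : EuclideanSpace ℝ (Fin n)) (hmin : ∀ x, f xs ≤ f x) (hgs : f' xs = 0)
    (a : ℝ) (ha : 0 ≤ a) (x v : EuclideanSpace ℝ (Fin n)) :
    CST μ L s f f' a x v ≤
      (a * betah1 μ L s + a ^ 2 * betah5 μ L s - betah3 μ) * ‖v‖ ^ 2
        + (a * betah2 μ s - betah4 μ L s) * ‖f' x‖ ^ 2 := by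

  have hL : 0 < L := lt_of_lt_of_le hμ hμL
  have hr : 0 < Real.sqrt μ := Real.sqrt_pos.mpr hμ
  have hms : (0:ℝ) < ms μ s := by
    have := Real.sqrt_nonneg (μ * s); unfold ms; linarith
  have hK : (0:ℝ) ≤ ‖v‖ := norm_nonneg _
  have hG : (0:ℝ) ≤ ‖f' x‖ := norm_nonneg _
  set y := x + a • v with hy
  have hnorm : ‖a • v‖ = a * ‖v‖ := by
    rw [norm_smul, Real.norm_of_nonneg ha]
  have hyx : y - x = a • v := by simp [hy]
  have hD : f x - f y ≤ a * (‖f' x‖ * ‖v‖) - μ / 2 * (a * ‖v‖) ^ 2 := by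
    have h1 := hconv x y
    rw [hyx] at h1
    have h2 : ⟪f' x, a • v⟫ = a * ⟪f' x, v⟫ := real_inner_smul_right _ _ _
    have h3 : |⟪f' x, v⟫| ≤ ‖f' x‖ * ‖v‖ := abs_real_inner_le_norm _ _
    have h4 : -(‖f' x‖ * ‖v‖) ≤ ⟪f' x, v⟫ := neg_le_of_abs_le h3
    rw [hnorm] at h1
    nlinarith [mul_le_mul_of_nonneg_left h4 ha]
  have hlipv : ‖f' y - f' x‖ ≤ L * (a * ‖v‖) := by
    have := hlip y x
    rwa [show y - x = a • v from hyx, hnorm] at this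
  have hip1 : -⟪f' y - f' x, v⟫ ≤ L * (a * ‖v‖) * ‖v‖ := by
    have h3 : |⟪f' y - f' x, v⟫| ≤ ‖f' y - f' x‖ * ‖v‖ := abs_real_inner_le_norm _ _
    have := neg_le_of_abs_le h3
    nlinarith [mul_le_mul_of_nonneg_right hlipv hK]
  have hH : ‖f' y‖ ≤ ‖f' x‖ + L * (a * ‖v‖) := by
    have := norm_sub_norm_le (f' y) (f' x)
    linarith
  have hip2 : ⟪f' y, a • v⟫ ≤ a * ((‖f' x‖ + L * (a * ‖v‖)) * ‖v‖) := by
    have h2 : ⟪f' y, a • v⟫ = a * ⟪f' y, v⟫ := real_inner_smul_right _ _ _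
    have h3 : ⟪f' y, v⟫ ≤ ‖f' y‖ * ‖v‖ := real_inner_le_norm _ _
    rw [h2]
    have h4 : ⟪f' y, v⟫ ≤ (‖f' x‖ + L * (a * ‖v‖)) * ‖v‖ :=
      h3.trans (mul_le_mul_of_nonneg_right hH hK)
    exact mul_le_mul_of_nonneg_left h4 ha
  set r := Real.sqrt μ with hrdef
  set K := ‖v‖
  set G := ‖f' x‖
  -- the inner bracket bound
  have hI : r * (f x - f y) + r * G * ‖a • v‖ - μ * r / 2 * ‖a • v‖ ^ 2
      - ⟪f' y - f' x, v⟫ + r * ⟪f' y, a • v⟫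
      ≤ a * (3 * r / 2 + L) * K ^ 2 + a ^ 2 * (5 * r * L / 2 - μ * r / 2) * K ^ 2
        + a * (3 / 2 * r) * G ^ 2 := by
    rw [hnorm]
    have h1 := mul_le_mul_of_nonneg_left hD hr.le
    have h2 := mul_le_mul_of_nonneg_left hip2 hr.le
    nlinarith [mul_nonneg (mul_nonneg hr.le ha) (sq_nonneg (G - K)),
      mul_nonneg (mul_nonneg hr.le hL.le) (sq_nonneg (a * K)),
      mul_nonneg (mul_nonneg hr.le hμ.le) (sq_nonneg (a * K))]
  have key := mul_le_mul_of_nonneg_left hI hms.le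
  unfold CST
  rw [← hrdef]
  have e1 : (a * betah1 μ L s + a ^ 2 * betah5 μ L s - betah3 μ) * K ^ 2
      + (a * betah2 μ s - betah4 μ L s) * G ^ 2
      = -(13 * r / 16) * K ^ 2 - μ ^ 2 * Real.sqrt s / (2 * L ^ 2) * G ^ 2
        - ms μ s * (3 * r / (8 * L)) * G ^ 2
        + ms μ s * (a * (3 * r / 2 + L) * K ^ 2
          + a ^ 2 * (5 * r * L / 2 - μ * r / 2) * K ^ 2
          + a * (3 / 2 * r) * G ^ 2) := by
    unfold betah1 betah2 betah3 betah4 betah5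
    rw [← hrdef]
    exact stmt9_aux μ L s a K G r (ms μ s) hL.ne'
  rw [e1]
  nlinarith [key]

end
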